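/- Hybrid lemma: Let A = (A_1,...,A_n), T (a random subset of [n]), B, and Z be jointly distributed discrete random variables, and let g map values of Z to subsets of [n]. Define ε = E_{z ← Z} E_{t ← T|z} [ I(A_t ; B | A_{g(z)}, Z=z) ] and δ = E_{z ← Z}[ SD( (A,B,T)|_{Z=z} , (A,B)|_{Z=z} × T|_{Z=z} ) ]. Then E_{z, a_{g(z)} ← Z, A_{g(z)}} [ SD( (A_T, T, B)|_{z,a_{g(z)}} , (A_T, T)|_{z,a_{g(z)}} × B|_{z,a_{g(z)}} ) ] ≤ 2√ε + 2δ. -/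

import Mathlib

open scoped BigOperators Classical

noncomputable section

variable {Ω : Type*} [Fintype Ω]

/-- Probability of an event under a mass function `μ`. -/
def prEv (μ : Ω → ℝ) (E : Ω → Prop) : ℝ := ∑ ω, if E ω then μ ω else 0

/-- Distribution (pmf) of a random variable. -/
def rvDist (μ : Ω → ℝ) {α : Type*} (X : Ω → α) : α → ℝ :=
  fun a => prEv μ (fun ω => X ω = a)

/-- Conditional distribution of `X` given the event `B = b`. -/
def condDist (μ : Ω → ℝ) {α β : Type*} (X : Ω → α) (B : Ω → β) (b : β) : α → ℝ :=
  fun a => prEv μ (fun ω => X ω = a ∧ B ω = b) / prEv μ (fun ω => B ω = b)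

/-- Product of two distributions. -/
def prodDist {α β : Type*} (P : α → ℝ) (Q : β → ℝ) : α × β → ℝ := fun p => P p.1 * Q p.2

/-- Statistical (total variation) distance between two distributions on a finite set. -/
def SD {α : Type*} [Fintype α] (P Q : α → ℝ) : ℝ := (1/2) * ∑ a, |P a - Q a|

/-- Shannon entropy (base 2) of a distribution, with the convention `0 · log(1/0) = 0`. -/
def H2 {α : Type*} [Fintype α] (P : α → ℝ) : ℝ :=
  ∑ a, if P a = 0 then 0 else P a * Real.logb 2 (1 / P a)

/-- Shannon entropy of a random variable. -/
def entRV (μ : Ω → ℝ) {α : Type*} [Fintype α] (X : Ω → α) : ℝ := H2 (rvDist μ X)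

/-- Conditional mutual information `I(A;B|C)` (in bits). -/
def condMI (μ : Ω → ℝ) {α β γ : Type*} [Fintype α] [Fintype β] [Fintype γ]
    (A : Ω → α) (B : Ω → β) (C : Ω → γ) : ℝ :=
  entRV μ (fun ω => (A ω, C ω)) + entRV μ (fun ω => (B ω, C ω))
    - entRV μ (fun ω => (A ω, B ω, C ω)) - entRV μ C

/-- The conditional probability measure given `Z = z`. -/
def condMeas (μ : Ω → ℝ) {ζ : Type*} (Z : Ω → ζ) (z : ζ) : Ω → ℝ :=
  fun ω => if Z ω = z then μ ω / prEv μ (fun ω' => Z ω' = z) else 0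

/-- `μ` is a probability mass function. -/
def IsPMF (μ : Ω → ℝ) : Prop := (∀ ω, 0 ≤ μ ω) ∧ ∑ ω, μ ω = 1

end

/-- Restriction of a tuple `a : Fin n → α` to a coordinate set `t`, encoded with `Option`. -/
noncomputable def restr {n : ℕ} {α : Type*} (t : Finset (Fin n)) (a : Fin n → α) :
    Fin n → Option α := fun i => if i ∈ t then some (a i) else none

/-!
Fix `z`, work under `ν = μ(· | Z = z)`, and let `c` range over the values of `C = A_{g(z)}`,
a function of `A`. Three hybrids lead from `(A_T, T, B)|c` to `(A_T, T)|c ⊗ B|c`: resample `T`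
from `τ = T|z` independently of `(A, B)`, replace each `(A_t, B)|c` by `A_t|c ⊗ B|c`, and undo
the resampling. By data processing each resampling step costs `SD((A, B, T)|c, (A, B)|c ⊗ τ)`,
whose average over `c` is exactly the `z`-term of `δ`, because `C` is a function of `A`. The
middle step costs `E_t SD((A_t, B)|c, A_t|c ⊗ B|c)`; the Hellinger distance gives the Pinsker-type
bound `SD ≤ √KL`, and the chain rule `I(A_t; B | C) = E_c KL((A_t, B)|c ‖ A_t|c ⊗ B|c)` with
Jensen's inequality turns it into `√ε_z`. A last Jensen step over `z` gives `√ε + 2δ`.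
-/

open Finset

section Distributions

variable {Ω α β γ : Type*} [Fintype Ω] {μ : Ω → ℝ}

lemma prEv_congr (μ : Ω → ℝ) {E F : Ω → Prop} (h : ∀ ω, E ω ↔ F ω) : prEv μ E = prEv μ F := by
  simp only [prEv, h]

lemma prEv_nonneg (hμ : ∀ ω, 0 ≤ μ ω) (E : Ω → Prop) : 0 ≤ prEv μ E :=
  sum_nonneg fun ω _ => by split <;> simp [hμ ω]

lemma prEv_mono (hμ : ∀ ω, 0 ≤ μ ω) {E F : Ω → Prop} (h : ∀ ω, E ω → F ω) :
    prEv μ E ≤ prEv μ F :=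
  sum_le_sum fun ω _ => by
    by_cases hE : E ω
    · simp [hE, h ω hE]
    · simp only [hE, if_false]; split <;> simp [hμ ω]

lemma prEv_eq_zero_of_imp (hμ : ∀ ω, 0 ≤ μ ω) {E F : Ω → Prop} (h : ∀ ω, E ω → F ω)
    (hF : prEv μ F = 0) : prEv μ E = 0 :=
  le_antisymm (hF ▸ prEv_mono hμ h) (prEv_nonneg hμ E)

lemma prEv_and_eq_ite (μ : Ω → ℝ) {E F : Ω → Prop} {q : Prop} (h : ∀ ω, E ω → (F ω ↔ q)) :
    prEv μ (fun ω => E ω ∧ F ω) = if q then prEv μ E else 0 := by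
  split_ifs with hq
  · exact prEv_congr μ fun ω => ⟨And.left, fun hE => ⟨hE, (h ω hE).2 hq⟩⟩
  · exact sum_eq_zero fun ω _ => if_neg fun hEF => hq ((h ω hEF.1).1 hEF.2)

lemma sum_prEv_eq_and [Fintype α] (μ : Ω → ℝ) (X : Ω → α) (E : Ω → Prop) :
    ∑ a, prEv μ (fun ω => X ω = a ∧ E ω) = prEv μ E := by
  unfold prEv
  rw [sum_comm]
  refine sum_congr rfl fun ω _ => ?_
  by_cases hE : E ω <;> simp [hE]

lemma rvDist_nonneg (hμ : ∀ ω, 0 ≤ μ ω) (X : Ω → α) (a : α) : 0 ≤ rvDist μ X a :=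
  prEv_nonneg hμ _

lemma sum_rvDist [Fintype α] (μ : Ω → ℝ) (X : Ω → α) : ∑ a, rvDist μ X a = ∑ ω, μ ω := by
  simpa [prEv, rvDist] using sum_prEv_eq_and μ X fun _ => True

lemma condDist_nonneg (hμ : ∀ ω, 0 ≤ μ ω) (X : Ω → α) (C : Ω → β) (c : β) (a : α) :
    0 ≤ condDist μ X C c a :=
  div_nonneg (prEv_nonneg hμ _) (prEv_nonneg hμ _)

lemma sum_condDist [Fintype α] (X : Ω → α) (C : Ω → β) {c : β}
    (hc : prEv μ (fun ω => C ω = c) ≠ 0) : ∑ a, condDist μ X C c a = 1 := by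
  unfold condDist
  rw [← sum_div, sum_prEv_eq_and, div_self hc]

lemma condDist_of_prEv_eq_zero (X : Ω → α) (C : Ω → β) {c : β}
    (hc : prEv μ (fun ω => C ω = c) = 0) : condDist μ X C c = 0 := by
  funext a; simp [condDist, hc]

lemma rvDist_mul_condDist (hμ : ∀ ω, 0 ≤ μ ω) (X : Ω → α) (C : Ω → β) (c : β) (a : α) :
    rvDist μ C c * condDist μ X C c a = prEv μ (fun ω => X ω = a ∧ C ω = c) := by
  rcases eq_or_ne (rvDist μ C c) 0 with hc | hc
  · rw [hc, zero_mul, prEv_eq_zero_of_imp hμ (fun ω => And.right) hc]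
  · exact mul_div_cancel₀ _ hc

lemma condDist_pair_le_left (hμ : ∀ ω, 0 ≤ μ ω) (X : Ω → α) (Y : Ω → β) (C : Ω → γ) (c : γ)
    (v : α × β) : condDist μ (fun ω => (X ω, Y ω)) C c v ≤ condDist μ X C c v.1 :=
  div_le_div_of_nonneg_right
    (prEv_mono hμ fun _ h => ⟨congrArg Prod.fst h.1, h.2⟩) (prEv_nonneg hμ _)

lemma condDist_pair_le_right (hμ : ∀ ω, 0 ≤ μ ω) (X : Ω → α) (Y : Ω → β) (C : Ω → γ) (c : γ)
    (v : α × β) : condDist μ (fun ω => (X ω, Y ω)) C c v ≤ condDist μ Y C c v.2 :=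
  div_le_div_of_nonneg_right
    (prEv_mono hμ fun _ h => ⟨congrArg Prod.snd h.1, h.2⟩) (prEv_nonneg hμ _)

end Distributions

section Conditioning

variable {Ω α ζ η : Type*} [Fintype Ω] {μ : Ω → ℝ}

lemma condMeas_nonneg (hμ : ∀ ω, 0 ≤ μ ω) (Z : Ω → ζ) (z : ζ) (ω : Ω) : 0 ≤ condMeas μ Z z ω := by
  unfold condMeas
  split
  · exact div_nonneg (hμ ω) (prEv_nonneg hμ _)
  · exact le_rfl

lemma prEv_condMeas (μ : Ω → ℝ) (Z : Ω → ζ) (z : ζ) (E : Ω → Prop) :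
    prEv (condMeas μ Z z) E = prEv μ (fun ω => E ω ∧ Z ω = z) / prEv μ (fun ω => Z ω = z) := by
  unfold prEv condMeas
  rw [sum_div]
  refine sum_congr rfl fun ω _ => ?_
  by_cases hE : E ω <;> by_cases hz : Z ω = z <;> simp [hE, hz, prEv]

lemma rvDist_condMeas (μ : Ω → ℝ) (Z : Ω → ζ) (z : ζ) (X : Ω → α) :
    rvDist (condMeas μ Z z) X = condDist μ X Z z :=
  funext fun _ => prEv_condMeas μ Z z _

lemma sum_condMeas_le_one (μ : Ω → ℝ) (Z : Ω → ζ) (z : ζ) :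
    ∑ ω, condMeas μ Z z ω ≤ 1 := by
  have h : ∑ ω, condMeas μ Z z ω = prEv (condMeas μ Z z) fun _ => True := by simp [prEv]
  rw [h, prEv_condMeas]
  simpa only [true_and] using div_self_le_one _

variable {Z : Ω → ζ} {z : ζ} {W W' : Ω → η}

omit [Fintype Ω] in
lemma pair_eq_iff_of_eqOn (hW : ∀ ω, Z ω = z → W ω = W' ω) (ω : Ω) (w : η) :
    (Z ω, W ω) = (z, w) ↔ W' ω = w ∧ Z ω = z := by
  rw [Prod.ext_iff]
  exact ⟨fun h => ⟨hW ω h.1 ▸ h.2, h.1⟩, fun h => ⟨h.2, (hW ω h.2).symm ▸ h.1⟩⟩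

lemma condDist_pair_eq_condDist_condMeas (hμ : ∀ ω, 0 ≤ μ ω) (hW : ∀ ω, Z ω = z → W ω = W' ω)
    (X : Ω → α) (w : η) :
    condDist μ X (fun ω => (Z ω, W ω)) (z, w) = condDist (condMeas μ Z z) X W' w := by
  funext x
  simp only [condDist, prEv_condMeas, pair_eq_iff_of_eqOn hW, and_assoc]
  rcases eq_or_ne (prEv μ fun ω => Z ω = z) 0 with hz | hz
  · simp [hz, prEv_eq_zero_of_imp hμ (fun ω (h : W' ω = w ∧ Z ω = z) => h.2) hz]
  · exact (div_div_div_cancel_right₀ hz _ _).symm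

lemma rvDist_pair_eq_mul_rvDist_condMeas (hμ : ∀ ω, 0 ≤ μ ω) (hW : ∀ ω, Z ω = z → W ω = W' ω)
    (w : η) :
    rvDist μ (fun ω => (Z ω, W ω)) (z, w) = rvDist μ Z z * rvDist (condMeas μ Z z) W' w := by
  rw [rvDist_condMeas, rvDist_mul_condDist hμ]
  exact prEv_congr μ (pair_eq_iff_of_eqOn hW · w)

end Conditioning

section Pushforward

variable {α β ι κ : Type*} [Fintype α]

noncomputable def push (f : α → β) (P : α → ℝ) : β → ℝ := fun b => ∑ a, if f a = b then P a else 0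

lemma rvDist_comp {Ω : Type*} [Fintype Ω] (μ : Ω → ℝ) (X : Ω → α) (f : α → β) :
    rvDist μ (fun ω => f (X ω)) = push f (rvDist μ X) := by
  funext b
  have h : ∀ a, (if f a = b then rvDist μ X a else 0) =
      ∑ ω, if X ω = a then (if f a = b then μ ω else 0) else 0 := fun a => by
    split_ifs <;> simp [rvDist, prEv]
  simp only [push, h]
  rw [sum_comm]
  simp [rvDist, prEv]

lemma sum_mul_push [Fintype β] (f : α → β) (P : α → ℝ) (F : β → ℝ) :
    ∑ b, F b * push f P b = ∑ a, F (f a) * P a := by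
  simp only [push, mul_sum, mul_ite, mul_zero]
  rw [sum_comm]
  simp

lemma le_push {f : α → β} {P : α → ℝ} (hP : ∀ a, 0 ≤ P a) (a : α) : P a ≤ push f P (f a) := by
  simpa [push] using single_le_sum (f := fun a' => if f a' = f a then P a' else 0)
    (fun a' _ => by split <;> simp [hP a']) (mem_univ a)

lemma push_prodDist_fst [Fintype ι] (f : α → β) (P : α → ℝ) (τ : ι → ℝ) :
    push (fun v : α × ι => (f v.1, v.2)) (prodDist P τ) = prodDist (push f P) τ := by
  funext y
  simp only [push, prodDist, Fintype.sum_prod_type, sum_mul, Prod.ext_iff]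
  refine sum_congr rfl fun a _ => ?_
  by_cases ha : f a = y.1 <;> simp [ha]

lemma push_prodDist_apply [Fintype ι] (F : α × ι → κ) (P : α → ℝ) (τ : ι → ℝ) (y : κ) :
    push F (prodDist P τ) y = ∑ t, τ t * push (fun a => F (a, t)) P y := by
  simp only [push, prodDist, Fintype.sum_prod_type, mul_sum]
  rw [sum_comm]
  refine sum_congr rfl fun t _ => sum_congr rfl fun a _ => ?_
  split_ifs <;> ring

lemma push_prodDist_apply_of_proj [Fintype ι] (F : α × ι → κ) (π : κ → ι)
    (hπ : ∀ a t, π (F (a, t)) = t) (P : α → ℝ) (τ : ι → ℝ) (y : κ) :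
    push F (prodDist P τ) y = τ (π y) * push (fun a => F (a, π y)) P y := by
  rw [push_prodDist_apply, sum_eq_single (π y) _ (by simp)]
  intro t _ ht
  refine mul_eq_zero_of_right _ (sum_eq_zero fun a _ => if_neg fun h => ht ?_)
  rw [← h, hπ]

end Pushforward

section StatisticalDistance

variable {α β ι : Type*} [Fintype α]

lemma SD_comm (P Q : α → ℝ) : SD P Q = SD Q P := by
  simp only [SD, abs_sub_comm]

lemma SD_triangle (P Q R : α → ℝ) : SD P R ≤ SD P Q + SD Q R := by
  simp only [SD, ← mul_add, ← sum_add_distrib]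
  gcongr with a
  exact abs_sub_le _ _ _

lemma SD_push_le [Fintype β] (f : α → β) (P Q : α → ℝ) : SD (push f P) (push f Q) ≤ SD P Q := by
  unfold SD push
  gcongr (1 / 2) * ?_
  calc ∑ b, |(∑ a, if f a = b then P a else 0) - ∑ a, if f a = b then Q a else 0|
      ≤ ∑ b, ∑ a, if f a = b then |P a - Q a| else 0 := by
        gcongr with b
        rw [← sum_sub_distrib]
        refine (abs_sum_le_sum_abs _ _).trans_eq (sum_congr rfl fun a _ => ?_)
        split_ifs <;> simp
    _ = ∑ a, |P a - Q a| := by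
        rw [sum_comm]
        simp

lemma SD_prodDist_right_le [Fintype β] (P Q : α → ℝ) {R : β → ℝ} (hR : ∀ b, 0 ≤ R b)
    (hR1 : ∑ b, R b ≤ 1) : SD (prodDist P R) (prodDist Q R) ≤ SD P Q := by
  unfold SD prodDist
  gcongr (1 / 2) * ?_
  calc ∑ v : α × β, |P v.1 * R v.2 - Q v.1 * R v.2|
      = ∑ a, |P a - Q a| * ∑ b, R b := by
        simp only [Fintype.sum_prod_type, mul_sum, ← sub_mul, abs_mul, abs_of_nonneg (hR _)]
    _ ≤ ∑ a, |P a - Q a| := by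
        gcongr with a
        exact mul_le_of_le_one_right (abs_nonneg _) hR1

lemma SD_slices_eq_sum {ρ : Type*} [Fintype ρ] [Fintype β] [Fintype ι] {τ : ι → ℝ}
    (hτ : ∀ t, 0 ≤ τ t) (U U' : ι → ρ × β → ℝ) :
    SD (fun v : (ρ × ι) × β => τ v.1.2 * U v.1.2 (v.1.1, v.2))
        (fun v => τ v.1.2 * U' v.1.2 (v.1.1, v.2))
      = ∑ t, τ t * SD (U t) (U' t) := by
  simp only [SD, ← mul_sub, abs_mul, abs_of_nonneg (hτ _), mul_sum, Fintype.sum_prod_type]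
  rw [sum_comm]
  exact sum_congr rfl fun t _ => by simp only [mul_left_comm]

end StatisticalDistance

lemma sum_mul_sqrt_le_sqrt_sum_mul {ι : Type*} [Fintype ι] {w x : ι → ℝ} (hw : ∀ i, 0 ≤ w i)
    (hw1 : ∑ i, w i ≤ 1) (hx : ∀ i, 0 ≤ x i) : ∑ i, w i * √(x i) ≤ √(∑ i, w i * x i) := by
  calc ∑ i, w i * √(x i) = ∑ i, √(w i) * √(w i * x i) := sum_congr rfl fun i _ => by
        rw [Real.sqrt_mul (hw i), ← mul_assoc, Real.mul_self_sqrt (hw i)]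
    _ ≤ √(∑ i, w i) * √(∑ i, w i * x i) :=
        Real.sum_sqrt_mul_sqrt_le _ hw fun i => mul_nonneg (hw i) (hx i)
    _ ≤ √(∑ i, w i * x i) :=
        mul_le_of_le_one_left (Real.sqrt_nonneg _) (Real.sqrt_le_one.2 hw1)

section Divergences

variable {α : Type*} [Fintype α] {P Q : α → ℝ}

/-- Kullback–Leibler divergence in bits. Where `Q a = 0 < P a` the junk value `logb 2 0 = 0`
silently drops the term, so every lemma about it assumes `Q a = 0 → P a = 0`. -/
noncomputable def KL2 (P Q : α → ℝ) : ℝ :=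
  ∑ a, if P a = 0 then 0 else P a * Real.logb 2 (P a / Q a)

/-- Squared Hellinger distance, without the customary factor `1/2`. -/
noncomputable def hellingerSq (P Q : α → ℝ) : ℝ := ∑ a, (√(P a) - √(Q a)) ^ 2

lemma two_mul_sub_sqrt_mul_le_mul_log {p q : ℝ} (hp : 0 < p) (hq : 0 < q) :
    2 * (p - √p * √q) ≤ p * Real.log (p / q) := by
  have hsp := Real.sqrt_pos.2 hp
  have hlog := Real.log_le_sub_one_of_pos (div_pos (Real.sqrt_pos.2 hq) hsp)
  rw [Real.log_div (Real.sqrt_pos.2 hq).ne' hsp.ne', Real.log_sqrt hp.le,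
    Real.log_sqrt hq.le] at hlog
  rw [Real.log_div hp.ne' hq.ne']
  have hp_eq : p * (√q / √p) = √p * √q := by
    field_simp
    rw [Real.sq_sqrt hp.le]
  nlinarith [mul_le_mul_of_nonneg_left hlog hp.le]

lemma sq_SD_le_hellingerSq (hP : ∀ a, 0 ≤ P a) (hQ : ∀ a, 0 ≤ Q a) (hP1 : ∑ a, P a = 1)
    (hQ1 : ∑ a, Q a = 1) : SD P Q ^ 2 ≤ hellingerSq P Q := by
  have habs : ∀ a, |P a - Q a| = |√(P a) - √(Q a)| * (√(P a) + √(Q a)) := fun a => by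
    rw [← abs_of_nonneg (by positivity : 0 ≤ √(P a) + √(Q a)), ← abs_mul]
    congr 1
    linear_combination (-1 : ℝ) * Real.sq_sqrt (hP a) + Real.sq_sqrt (hQ a)
  have hsum : ∑ a, (√(P a) + √(Q a)) ^ 2 ≤ 4 := by
    calc ∑ a, (√(P a) + √(Q a)) ^ 2 ≤ ∑ a, 2 * (P a + Q a) := by
          gcongr with a
          nlinarith [Real.sq_sqrt (hP a), Real.sq_sqrt (hQ a), sq_nonneg (√(P a) - √(Q a))]
      _ = 4 := by rw [← mul_sum, sum_add_distrib, hP1, hQ1]; norm_num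
  have hcs := sum_mul_sq_le_sq_mul_sq univ (fun a => |√(P a) - √(Q a)|)
    (fun a => √(P a) + √(Q a))
  simp only [sq_abs, ← habs] at hcs
  have hH : 0 ≤ hellingerSq P Q := by unfold hellingerSq; positivity
  unfold SD
  unfold hellingerSq at hH ⊢
  nlinarith

lemma hellingerSq_le_KL2 (hP : ∀ a, 0 ≤ P a) (hQ : ∀ a, 0 ≤ Q a) (hP1 : ∑ a, P a = 1)
    (hQ1 : ∑ a, Q a = 1) (hac : ∀ a, Q a = 0 → P a = 0) : hellingerSq P Q ≤ KL2 P Q := by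
  have hlog2 : 0 < Real.log 2 := Real.log_pos one_lt_two
  have hterm : ∀ a, 2 * (P a - √(P a) * √(Q a)) / Real.log 2 ≤
      if P a = 0 then 0 else P a * Real.logb 2 (P a / Q a) := fun a => by
    split_ifs with hPa
    · simp [hPa]
    · have hPpos := (hP a).lt_of_ne' hPa
      have hQpos := (hQ a).lt_of_ne' (mt (hac a) hPa)
      rw [Real.logb, ← mul_div_assoc]
      exact div_le_div_of_nonneg_right (two_mul_sub_sqrt_mul_le_mul_log hPpos hQpos) hlog2.le
  have hH : hellingerSq P Q = ∑ a, 2 * (P a - √(P a) * √(Q a)) := by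
    calc hellingerSq P Q = ∑ a, (2 * (P a - √(P a) * √(Q a)) + (Q a - P a)) :=
          sum_congr rfl fun a _ => by
            linear_combination Real.sq_sqrt (hP a) + Real.sq_sqrt (hQ a)
      _ = ∑ a, 2 * (P a - √(P a) * √(Q a)) := by
          rw [sum_add_distrib, sum_sub_distrib, hP1, hQ1, sub_self, add_zero]
  have hH0 : 0 ≤ hellingerSq P Q := by unfold hellingerSq; positivity
  calc hellingerSq P Q ≤ hellingerSq P Q / Real.log 2 :=
        le_div_self hH0 hlog2 (by linarith [Real.log_le_sub_one_of_pos two_pos])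
    _ ≤ KL2 P Q := by
        rw [hH, sum_div]
        exact sum_le_sum fun a _ => hterm a

lemma KL2_nonneg (hP : ∀ a, 0 ≤ P a) (hQ : ∀ a, 0 ≤ Q a) (hP1 : ∑ a, P a = 1)
    (hQ1 : ∑ a, Q a = 1) (hac : ∀ a, Q a = 0 → P a = 0) : 0 ≤ KL2 P Q :=
  (sum_nonneg fun _ _ => sq_nonneg _).trans (hellingerSq_le_KL2 hP hQ hP1 hQ1 hac)

lemma SD_le_sqrt_KL2 (hP : ∀ a, 0 ≤ P a) (hQ : ∀ a, 0 ≤ Q a) (hP1 : ∑ a, P a = 1)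
    (hQ1 : ∑ a, Q a = 1) (hac : ∀ a, Q a = 0 → P a = 0) : SD P Q ≤ √(KL2 P Q) :=
  Real.le_sqrt_of_sq_le ((sq_SD_le_hellingerSq hP hQ hP1 hQ1).trans
    (hellingerSq_le_KL2 hP hQ hP1 hQ1 hac))

end Divergences

section ChainRule

variable {Ω α β γ : Type*} [Fintype Ω] [Fintype α] [Fintype β] [Fintype γ] {μ : Ω → ℝ}

lemma H2_push {f : α → β} {P : α → ℝ} (hP : ∀ a, 0 ≤ P a) :
    H2 (push f P) = ∑ a, if P a = 0 then 0 else P a * Real.logb 2 (1 / push f P (f a)) := by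
  have hterm : ∀ b, (if push f P b = 0 then 0 else push f P b * Real.logb 2 (1 / push f P b))
      = (if push f P b = 0 then 0 else Real.logb 2 (1 / push f P b)) * push f P b := fun b => by
    split_ifs <;> simp [mul_comm]
  rw [H2, sum_congr rfl fun b _ => hterm b, sum_mul_push]
  refine sum_congr rfl fun a _ => ?_
  rcases eq_or_ne (P a) 0 with ha | ha
  · simp [ha]
  · have hpush : push f P (f a) ≠ 0 := ((hP a).lt_of_ne' ha |>.trans_le (le_push hP a)).ne'
    rw [if_neg ha, if_neg hpush, mul_comm]

lemma entropy_terms_eq_KL_term {p a b c : ℝ} (hp : 0 < p) (ha : 0 < a) (hb : 0 < b) (hc : 0 < c) :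
    p * (Real.logb 2 (1 / a) + Real.logb 2 (1 / b) - Real.logb 2 (1 / p) - Real.logb 2 (1 / c))
      = c * (p / c * Real.logb 2 (p / c / (a / c * (b / c)))) := by
  simp only [Real.logb, one_div, Real.log_inv, Real.log_div hp.ne' hc.ne',
    Real.log_div ha.ne' hc.ne', Real.log_div hb.ne' hc.ne',
    Real.log_mul (div_pos ha hc).ne' (div_pos hb hc).ne',
    Real.log_div (div_pos hp hc).ne' (mul_pos (div_pos ha hc) (div_pos hb hc)).ne']
  field_simp
  ring

theorem condMI_eq_sum_rvDist_mul_KL2 (hμ : ∀ ω, 0 ≤ μ ω) (X : Ω → α) (B : Ω → β) (C : Ω → γ) :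
    condMI μ X B C = ∑ c, rvDist μ C c *
      KL2 (condDist μ (fun ω => (X ω, B ω)) C c)
        (prodDist (condDist μ X C c) (condDist μ B C c)) := by
  set p := rvDist μ (fun ω => (X ω, B ω, C ω)) with hp_def
  have hp : ∀ v, 0 ≤ p v := rvDist_nonneg hμ _
  set fXC := fun v : α × β × γ => (v.1, v.2.2)
  set fBC := fun v : α × β × γ => v.2
  set fC := fun v : α × β × γ => v.2.2
  have hXC : rvDist μ (fun ω => (X ω, C ω)) = push fXC p :=
    rvDist_comp μ (fun ω => (X ω, B ω, C ω)) fXC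
  have hBC : rvDist μ (fun ω => (B ω, C ω)) = push fBC p :=
    rvDist_comp μ (fun ω => (X ω, B ω, C ω)) fBC
  have hC : rvDist μ C = push fC p :=
    rvDist_comp μ (fun ω => (X ω, B ω, C ω)) fC
  have hcondXB : ∀ x b c, condDist μ (fun ω => (X ω, B ω)) C c (x, b) = p (x, b, c) / push fC p c :=
    fun x b c => by
      rw [← hC]
      exact congrArg (· / _) (prEv_congr μ fun ω => by simp [Prod.ext_iff, and_assoc])
  have hcondX : ∀ x c, condDist μ X C c x = push fXC p (x, c) / push fC p c := fun x c => by
    rw [← hC, ← hXC]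
    exact congrArg (· / _) (prEv_congr μ fun ω => by simp [Prod.ext_iff])
  have hcondB : ∀ b c, condDist μ B C c b = push fBC p (b, c) / push fC p c := fun b c => by
    rw [← hC, ← hBC]
    exact congrArg (· / _) (prEv_congr μ fun ω => by simp [Prod.ext_iff])
  unfold condMI entRV
  rw [← hp_def, hXC, hBC, hC, H2_push hp, H2_push hp, H2_push hp, H2, ← sum_add_distrib,
    ← sum_sub_distrib, ← sum_sub_distrib]
  simp only [KL2, mul_sum, Fintype.sum_prod_type, prodDist, hcondXB, hcondX, hcondB]
  conv_rhs => rw [sum_comm]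
  refine sum_congr rfl fun x _ => ?_
  conv_rhs => rw [sum_comm]
  refine sum_congr rfl fun b _ => sum_congr rfl fun c _ => ?_
  rcases (hp (x, b, c)).eq_or_lt with hv | hv
  · simp [← hv]
  · have hXC' : 0 < push fXC p (x, c) := hv.trans_le (le_push hp (x, b, c))
    have hBC' : 0 < push fBC p (b, c) := hv.trans_le (le_push hp (x, b, c))
    have hC' : 0 < push fC p c := hv.trans_le (le_push hp (x, b, c))
    simp only [if_neg hv.ne', if_neg (div_pos hv hC').ne']
    rw [← entropy_terms_eq_KL_term hv hXC' hBC' hC']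
    ring

end ChainRule

section ConditionalPinsker

variable {Ω α β γ : Type*} [Fintype Ω] [Fintype α] [Fintype β] {μ : Ω → ℝ}

lemma pinsker_condDist (hμ : ∀ ω, 0 ≤ μ ω) (X : Ω → α) (B : Ω → β) (C : Ω → γ) (c : γ) :
    0 ≤ KL2 (condDist μ (fun ω => (X ω, B ω)) C c)
        (prodDist (condDist μ X C c) (condDist μ B C c)) ∧
      SD (condDist μ (fun ω => (X ω, B ω)) C c)
          (prodDist (condDist μ X C c) (condDist μ B C c)) ≤
        √(KL2 (condDist μ (fun ω => (X ω, B ω)) C c)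
          (prodDist (condDist μ X C c) (condDist μ B C c))) := by
  rcases eq_or_ne (prEv μ fun ω => C ω = c) 0 with hc | hc
  · simp [condDist_of_prEv_eq_zero _ _ hc, KL2, SD, prodDist]
  have hP := condDist_nonneg hμ (fun ω => (X ω, B ω)) C c
  have hQ : ∀ v, 0 ≤ prodDist (condDist μ X C c) (condDist μ B C c) v := fun v =>
    mul_nonneg (condDist_nonneg hμ X C c v.1) (condDist_nonneg hμ B C c v.2)
  have hQ1 : ∑ v, prodDist (condDist μ X C c) (condDist μ B C c) v = 1 := by
    simp only [prodDist, Fintype.sum_prod_type, ← mul_sum, ← sum_mul, sum_condDist _ _ hc,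
      one_mul]
  have hac : ∀ v, prodDist (condDist μ X C c) (condDist μ B C c) v = 0 →
      condDist μ (fun ω => (X ω, B ω)) C c v = 0 := fun v hv =>
    (mul_eq_zero.1 hv).elim
      (fun h => le_antisymm (h ▸ condDist_pair_le_left hμ X B C c v) (hP v))
      (fun h => le_antisymm (h ▸ condDist_pair_le_right hμ X B C c v) (hP v))
  have hP1 := sum_condDist (fun ω => (X ω, B ω)) C hc
  exact ⟨KL2_nonneg hP hQ hP1 hQ1 hac, SD_le_sqrt_KL2 hP hQ hP1 hQ1 hac⟩

lemma condMI_nonneg [Fintype γ] (hμ : ∀ ω, 0 ≤ μ ω) (X : Ω → α) (B : Ω → β) (C : Ω → γ) :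
    0 ≤ condMI μ X B C := by
  rw [condMI_eq_sum_rvDist_mul_KL2 hμ]
  exact sum_nonneg fun c _ => mul_nonneg (prEv_nonneg hμ _) (pinsker_condDist hμ X B C c).1

end ConditionalPinsker

section Hybrid

variable {Ω γ β ι ρ κ ζ : Type*} [Fintype Ω] [Fintype γ] [Fintype β] [Fintype ι] [Fintype ρ]
  [Fintype κ] {ν : Ω → ℝ}

lemma SD_resampled_eq_sum (A : Ω → γ) (B : Ω → β) (k : ι → γ → ρ) {τ : ι → ℝ}
    (hτ : ∀ t, 0 ≤ τ t) :
    SD (push (fun v : (γ × β) × ι => ((k v.2 v.1.1, v.2), v.1.2))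
          (prodDist (rvDist ν fun ω => (A ω, B ω)) τ))
        (prodDist (push (fun v : γ × ι => (k v.2 v.1, v.2)) (prodDist (rvDist ν A) τ))
          (rvDist ν B))
      = ∑ t, τ t * SD (rvDist ν fun ω => (k t (A ω), B ω))
          (prodDist (rvDist ν fun ω => k t (A ω)) (rvDist ν B)) := by
  have hH1 : push (fun v : (γ × β) × ι => ((k v.2 v.1.1, v.2), v.1.2))
        (prodDist (rvDist ν fun ω => (A ω, B ω)) τ)
      = fun v => τ v.1.2 * (rvDist ν fun ω => (k v.1.2 (A ω), B ω)) (v.1.1, v.2) := by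
    funext v
    rw [push_prodDist_apply_of_proj _ (fun v => v.1.2) (fun _ _ => rfl), ← rvDist_comp]
    exact congrArg (τ v.1.2 * ·) (prEv_congr ν fun ω => by simp [Prod.ext_iff])
  have hH2 : prodDist (push (fun v : γ × ι => (k v.2 v.1, v.2)) (prodDist (rvDist ν A) τ))
        (rvDist ν B)
      = fun v =>
          τ v.1.2 * prodDist (rvDist ν fun ω => k v.1.2 (A ω)) (rvDist ν B) (v.1.1, v.2) := by
    funext v
    rw [prodDist, push_prodDist_apply_of_proj _ Prod.snd (fun _ _ => rfl), ← rvDist_comp,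
      mul_assoc]
    exact congrArg (fun x => τ v.1.2 * (x * _)) (prEv_congr ν fun ω => by simp [Prod.ext_iff])
  rw [hH1, hH2]
  exact SD_slices_eq_sum hτ (fun t => rvDist ν fun ω => (k t (A ω), B ω))
    (fun t => prodDist (rvDist ν fun ω => k t (A ω)) (rvDist ν B))

/-- The two intermediate hybrids are `push F (law (A, B) ⊗ τ)`, that is `T` resampled from `τ`
independently of `(A, B)`, and `push G (law A ⊗ τ) ⊗ law B`. -/
theorem SD_hybrid_le (hν : ∀ ω, 0 ≤ ν ω) (hν1 : ∑ ω, ν ω ≤ 1) (A : Ω → γ) (B : Ω → β)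
    (T : Ω → ι) (k : ι → γ → ρ) {τ : ι → ℝ} (hτ : ∀ t, 0 ≤ τ t) :
    SD (rvDist ν fun ω => ((k (T ω) (A ω), T ω), B ω))
        (prodDist (rvDist ν fun ω => (k (T ω) (A ω), T ω)) (rvDist ν B))
      ≤ 2 * SD (rvDist ν fun ω => ((A ω, B ω), T ω)) (prodDist (rvDist ν fun ω => (A ω, B ω)) τ)
        + ∑ t, τ t * SD (rvDist ν fun ω => (k t (A ω), B ω))
            (prodDist (rvDist ν fun ω => k t (A ω)) (rvDist ν B)) := by
  set P := rvDist ν fun ω => ((A ω, B ω), T ω)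
  set PAB := rvDist ν fun ω => (A ω, B ω)
  set F : (γ × β) × ι → (ρ × ι) × β := fun v => ((k v.2 v.1.1, v.2), v.1.2)
  set G : γ × ι → ρ × ι := fun v => (k v.2 v.1, v.2)
  set π : (γ × β) × ι → γ × ι := fun v => (v.1.1, v.2)
  have hH0 : (rvDist ν fun ω => ((k (T ω) (A ω), T ω), B ω)) = push F P :=
    rvDist_comp ν (fun ω => ((A ω, B ω), T ω)) F
  have hH3 : (rvDist ν fun ω => (k (T ω) (A ω), T ω)) = push G (push π P) :=
    (rvDist_comp ν (fun ω => (A ω, T ω)) G).trans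
      (congrArg (push G) (rvDist_comp ν (fun ω => ((A ω, B ω), T ω)) π))
  have hπ : push π (prodDist PAB τ) = prodDist (rvDist ν A) τ :=
    (push_prodDist_fst Prod.fst PAB τ).trans (by rw [← rvDist_comp])
  have h01 : SD (push F P) (push F (prodDist PAB τ)) ≤ SD P (prodDist PAB τ) := SD_push_le F _ _
  have h12 : SD (push F (prodDist PAB τ)) (prodDist (push G (prodDist (rvDist ν A) τ)) (rvDist ν B))
      = ∑ t, τ t * SD (rvDist ν fun ω => (k t (A ω), B ω))
          (prodDist (rvDist ν fun ω => k t (A ω)) (rvDist ν B)) := SD_resampled_eq_sum A B k hτ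
  have h23 : SD (prodDist (push G (prodDist (rvDist ν A) τ)) (rvDist ν B))
      (prodDist (push G (push π P)) (rvDist ν B)) ≤ SD P (prodDist PAB τ) :=
    calc _ ≤ SD (push G (prodDist (rvDist ν A) τ)) (push G (push π P)) :=
          SD_prodDist_right_le _ _ (rvDist_nonneg hν B) ((sum_rvDist ν B).trans_le hν1)
      _ ≤ SD (push π (prodDist PAB τ)) (push π P) := hπ ▸ SD_push_le G _ _
      _ ≤ SD P (prodDist PAB τ) := (SD_push_le π _ _).trans_eq (SD_comm _ _)
  rw [hH0, hH3]
  linarith [SD_triangle (push F P) (push F (prodDist PAB τ))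
      (prodDist (push G (push π P)) (rvDist ν B)),
    SD_triangle (push F (prodDist PAB τ)) (prodDist (push G (prodDist (rvDist ν A) τ)) (rvDist ν B))
      (prodDist (push G (push π P)) (rvDist ν B))]

lemma sum_rvDist_mul_SD_condDist_comp (hν : ∀ ω, 0 ≤ ν ω) (Y : Ω → γ) (T : Ω → ι) (h : γ → κ)
    (R : ι → ℝ) :
    ∑ c, rvDist ν (fun ω => h (Y ω)) c *
        SD (condDist ν (fun ω => (Y ω, T ω)) (fun ω => h (Y ω)) c)
          (prodDist (condDist ν Y (fun ω => h (Y ω)) c) R)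
      = SD (rvDist ν fun ω => (Y ω, T ω)) (prodDist (rvDist ν Y) R) := by
  have hterm : ∀ c (v : γ × ι), rvDist ν (fun ω => h (Y ω)) c *
      |condDist ν (fun ω => (Y ω, T ω)) (fun ω => h (Y ω)) c v
        - condDist ν Y (fun ω => h (Y ω)) c v.1 * R v.2|
      = if h v.1 = c then |rvDist ν (fun ω => (Y ω, T ω)) v - rvDist ν Y v.1 * R v.2| else 0 := by
    intro c v
    rw [← abs_of_nonneg (rvDist_nonneg hν (fun ω => h (Y ω)) c), ← abs_mul, mul_sub, ← mul_assoc,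
      rvDist_mul_condDist hν, rvDist_mul_condDist hν,
      prEv_and_eq_ite ν (q := h v.1 = c) fun ω hω => by rw [← hω],
      prEv_and_eq_ite ν (q := h v.1 = c) fun ω hω => by rw [← hω]]
    split_ifs <;> simp [rvDist]
  simp only [SD, prodDist, mul_left_comm _ (1 / 2 : ℝ), mul_sum, hterm]
  rw [← mul_sum, sum_comm]
  simp [mul_sum]

lemma sum_rvDist_mul_sum_SD_le_sqrt (hν : ∀ ω, 0 ≤ ν ω) (hν1 : ∑ ω, ν ω ≤ 1)
    (X : ι → Ω → ρ) (B : Ω → β) (C : Ω → κ) {τ : ι → ℝ} (hτ : ∀ t, 0 ≤ τ t)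
    (hτ1 : ∑ t, τ t ≤ 1) :
    ∑ c, rvDist ν C c * ∑ t, τ t *
        SD (condDist ν (fun ω => (X t ω, B ω)) C c)
          (prodDist (condDist ν (X t) C c) (condDist ν B C c))
      ≤ √(∑ t, τ t * condMI ν (X t) B C) := by
  set KL := fun c t => KL2 (condDist ν (fun ω => (X t ω, B ω)) C c)
    (prodDist (condDist ν (X t) C c) (condDist ν B C c))
  have hw : ∀ c, 0 ≤ rvDist ν C c := rvDist_nonneg hν C
  have hw1 : ∑ c, rvDist ν C c ≤ 1 := (sum_rvDist ν C).trans_le hν1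
  calc _ ≤ ∑ c, rvDist ν C c * ∑ t, τ t * √(KL c t) := by
        gcongr with c _ t
        · exact hw c
        · exact hτ t
        · exact (pinsker_condDist hν (X t) B C c).2
    _ = ∑ t, τ t * ∑ c, rvDist ν C c * √(KL c t) := by
        simp only [mul_sum]
        rw [sum_comm]
        simp only [mul_left_comm]
    _ ≤ ∑ t, τ t * √(∑ c, rvDist ν C c * KL c t) := by
        gcongr with t
        · exact hτ t
        · exact sum_mul_sqrt_le_sqrt_sum_mul hw hw1 fun c => (pinsker_condDist hν (X t) B C c).1
    _ = ∑ t, τ t * √(condMI ν (X t) B C) := by simp only [condMI_eq_sum_rvDist_mul_KL2 hν, KL]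
    _ ≤ √(∑ t, τ t * condMI ν (X t) B C) :=
        sum_mul_sqrt_le_sqrt_sum_mul hτ hτ1 fun t => condMI_nonneg hν _ _ _

theorem sum_condDist_SD_hybrid_le (hν : ∀ ω, 0 ≤ ν ω) (hν1 : ∑ ω, ν ω ≤ 1) (A : Ω → γ)
    (B : Ω → β) (T : Ω → ι) (k : ι → γ → ρ) (h : γ → κ) :
    ∑ c, rvDist ν (fun ω => h (A ω)) c *
        SD (condDist ν (fun ω => ((k (T ω) (A ω), T ω), B ω)) (fun ω => h (A ω)) c)
          (prodDist (condDist ν (fun ω => (k (T ω) (A ω), T ω)) (fun ω => h (A ω)) c)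
            (condDist ν B (fun ω => h (A ω)) c))
      ≤ √(∑ t, rvDist ν T t * condMI ν (fun ω => k t (A ω)) B (fun ω => h (A ω)))
        + 2 * SD (rvDist ν fun ω => ((A ω, B ω), T ω))
            (prodDist (rvDist ν fun ω => (A ω, B ω)) (rvDist ν T)) := by
  set C := fun ω => h (A ω)
  have hτ := rvDist_nonneg hν T
  have hslice : ∀ c, SD (condDist ν (fun ω => ((k (T ω) (A ω), T ω), B ω)) C c)
        (prodDist (condDist ν (fun ω => (k (T ω) (A ω), T ω)) C c) (condDist ν B C c))
      ≤ 2 * SD (condDist ν (fun ω => ((A ω, B ω), T ω)) C c)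
          (prodDist (condDist ν (fun ω => (A ω, B ω)) C c) (rvDist ν T))
        + ∑ t, rvDist ν T t * SD (condDist ν (fun ω => (k t (A ω), B ω)) C c)
            (prodDist (condDist ν (fun ω => k t (A ω)) C c) (condDist ν B C c)) := fun c => by
    simpa only [rvDist_condMeas] using
      SD_hybrid_le (condMeas_nonneg hν C c) (sum_condMeas_le_one ν C c) A B T k hτ
  have hδ := sum_rvDist_mul_SD_condDist_comp hν (fun ω => (A ω, B ω)) T (fun v => h v.1)
    (rvDist ν T)
  have hε := sum_rvDist_mul_sum_SD_le_sqrt hν hν1 (fun t ω => k t (A ω)) B C hτ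
    ((sum_rvDist ν T).trans_le hν1)
  dsimp only at hδ hε
  refine (sum_le_sum fun c _ =>
    mul_le_mul_of_nonneg_left (hslice c) (rvDist_nonneg hν C c)).trans ?_
  simp only [mul_add, sum_add_distrib, mul_left_comm _ (2 : ℝ), ← mul_sum]
  linarith

theorem condDist_pair_SD_hybrid_le {μ : Ω → ℝ} (hμ : ∀ ω, 0 ≤ μ ω) (A : Ω → γ) (B : Ω → β)
    (T : Ω → ι) (Z : Ω → ζ) (k : ι → γ → ρ) (h : ζ → γ → κ) (z : ζ) :
    ∑ c, rvDist μ (fun ω => (Z ω, h (Z ω) (A ω))) (z, c) *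
        SD (condDist μ (fun ω => ((k (T ω) (A ω), T ω), B ω))
              (fun ω => (Z ω, h (Z ω) (A ω))) (z, c))
          (prodDist (condDist μ (fun ω => (k (T ω) (A ω), T ω))
              (fun ω => (Z ω, h (Z ω) (A ω))) (z, c))
            (condDist μ B (fun ω => (Z ω, h (Z ω) (A ω))) (z, c)))
      ≤ rvDist μ Z z *
          (√(∑ t, condDist μ T Z z t *
              condMI (condMeas μ Z z) (fun ω => k t (A ω)) B (fun ω => h z (A ω)))
            + 2 * SD (condDist μ (fun ω => ((A ω, B ω), T ω)) Z z)
                (prodDist (condDist μ (fun ω => (A ω, B ω)) Z z) (condDist μ T Z z))) := by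
  have hW : ∀ ω, Z ω = z → h (Z ω) (A ω) = h z (A ω) := fun ω hz => by rw [hz]
  simp only [rvDist_pair_eq_mul_rvDist_condMeas hμ hW, condDist_pair_eq_condDist_condMeas hμ hW,
    mul_assoc, ← mul_sum]
  refine mul_le_mul_of_nonneg_left ?_ (rvDist_nonneg hμ Z z)
  simpa only [rvDist_condMeas] using sum_condDist_SD_hybrid_le (condMeas_nonneg hμ Z z)
    (sum_condMeas_le_one μ Z z) A B T k (h z)

end Hybrid

/-- Hybrid lemma: if `ε` bounds the expected conditional information between `A_t` and `B`
given `A_{g(z)}` (under `Z = z`, averaged over `t ← T|z`), and `δ` bounds the expected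
statistical dependence of `T` on `(A,B)` given `Z`, then the expected statistical distance
between the joint of `(A_T, T, B)` and the corresponding product, conditioned on
`(Z, A_{g(Z)})`, is at most `2√ε + 2δ`. -/
theorem hybrid_lemma {Ω α β ζ : Type*} {n : ℕ}
    [Fintype Ω] [Fintype α] [Fintype β] [Fintype ζ]
    (μ : Ω → ℝ) (hμ : IsPMF μ)
    (A : Ω → Fin n → α) (T : Ω → Finset (Fin n)) (B : Ω → β) (Z : Ω → ζ)
    (g : ζ → Finset (Fin n)) (ε δ : ℝ)
    (hε : ε = ∑ z : ζ, rvDist μ Z z *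
        ∑ t : Finset (Fin n), condDist μ T Z z t *
          condMI (condMeas μ Z z) (fun ω => restr t (A ω)) B
            (fun ω => restr (g z) (A ω)))
    (hδ : δ = ∑ z : ζ, rvDist μ Z z *
        SD (condDist μ (fun ω => ((A ω, B ω), T ω)) Z z)
           (prodDist (condDist μ (fun ω => (A ω, B ω)) Z z) (condDist μ T Z z))) :
    ∑ w : ζ × (Fin n → Option α),
        rvDist μ (fun ω => (Z ω, restr (g (Z ω)) (A ω))) w *
          SD (condDist μ (fun ω => ((restr (T ω) (A ω), T ω), B ω))
                (fun ω => (Z ω, restr (g (Z ω)) (A ω))) w)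
             (prodDist
               (condDist μ (fun ω => (restr (T ω) (A ω), T ω))
                 (fun ω => (Z ω, restr (g (Z ω)) (A ω))) w)
               (condDist μ B (fun ω => (Z ω, restr (g (Z ω)) (A ω))) w))
      ≤ 2 * Real.sqrt ε + 2 * δ := by
  have hJensen := sum_mul_sqrt_le_sqrt_sum_mul (rvDist_nonneg hμ.1 Z)
    ((sum_rvDist μ Z).trans_le hμ.2.le) fun z => sum_nonneg (s := univ) fun t _ =>
      mul_nonneg (condDist_nonneg hμ.1 T Z z t) (condMI_nonneg (condMeas_nonneg hμ.1 Z z)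
        (fun ω => restr t (A ω)) B fun ω => restr (g z) (A ω))
  rw [Fintype.sum_prod_type]
  refine (sum_le_sum fun z _ =>
    condDist_pair_SD_hybrid_le hμ.1 A B T Z restr (fun z => restr (g z)) z).trans ?_
  rw [← hε] at hJensen
  simp only [mul_add, sum_add_distrib, mul_left_comm _ (2 : ℝ), ← mul_sum, ← hδ]
  linarith [Real.sqrt_nonneg ε]
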